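/- Let 𝕍 = {(x,0,0)} and 𝕎 = {(0,y,t)} in the Heisenberg group ℍ, and let φ = (φ₁, φ₂) : E → 𝕎 (E ⊆ 𝕍 ≅ ℝ, 𝕎 ≅ ℝ²) be an intrinsic L-Lipschitz function, i.e. its graph map Φ(v) = (v, φ₁(v), φ₂(v) + φ₁(v)v/2) satisfies ‖π_𝕎(Φ(v₁)⁻¹·Φ(v₂))‖ ≤ L‖π_𝕍(Φ(v₁)⁻¹·Φ(v₂))‖ for all v₁, v₂ ∈ E. Then the map (φ₁, −φ₂) : E → ℝ² is 2L²-tame. -/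

import Mathlib

/-!
In coordinates, the vertical part of `Φ(v₁)⁻¹·Φ(v₂)` has `t`-coordinate
`φ₂(v₂) − φ₂(v₁) + (v₂ − v₁) φ₁(v₁)` and the horizontal part has norm `|v₂ − v₁|`.
Since the norm dominates the square root of `|t|`, intrinsic Lipschitzness gives the first-order
Taylor bound `|φ₂(v₂) − φ₂(v₁) + (v₂ − v₁) φ₁(v₁)| ≤ L² (v₂ − v₁)²`. Dividing by `v₂ − v₁`
bounds each of the two terms of the tameness inequality for `(φ₁, −φ₂)` by `L² |v₁ − v₂|`.
-/

/-- Heisenberg group product on `ℝ³`. -/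
noncomputable def Hmul (p q : ℝ × ℝ × ℝ) : ℝ × ℝ × ℝ :=
  (p.1 + q.1, p.2.1 + q.2.1, p.2.2 + q.2.2 + (p.1 * q.2.1 - q.1 * p.2.1) / 2)

/-- Heisenberg group inverse. -/
def Hinv (p : ℝ × ℝ × ℝ) : ℝ × ℝ × ℝ := (-p.1, -p.2.1, -p.2.2)

/-- The max-norm `‖(x,y,t)‖ = max (√(x²+y²)) (√|t|)`. -/
noncomputable def Hnorm (p : ℝ × ℝ × ℝ) : ℝ :=
  max (Real.sqrt (p.1 ^ 2 + p.2.1 ^ 2)) (Real.sqrt |p.2.2|)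

/-- Horizontal projection onto `𝕍 = {(x,0,0)}`. -/
def piV (p : ℝ × ℝ × ℝ) : ℝ × ℝ × ℝ := (p.1, 0, 0)

/-- Vertical projection onto `𝕎 = {(0,y,t)}`. -/
noncomputable def piW (p : ℝ × ℝ × ℝ) : ℝ × ℝ × ℝ := (0, p.2.1, p.2.2 - p.1 * p.2.1 / 2)

/-- The graph map of `φ = (φ₁, φ₂) : 𝕍 → 𝕎`. -/
noncomputable def graphMap (φ₁ φ₂ : ℝ → ℝ) (v : ℝ) : ℝ × ℝ × ℝ :=
  (v, φ₁ v, φ₂ v + φ₁ v * v / 2)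

theorem sqrt_abs_le_Hnorm (p : ℝ × ℝ × ℝ) : Real.sqrt |p.2.2| ≤ Hnorm p :=
  le_max_right _ _

theorem Hnorm_mk_zero_zero (a : ℝ) : Hnorm (a, 0, 0) = |a| := by
  simp [Hnorm, Real.sqrt_sq_eq_abs]

section GraphMap

variable (φ₁ φ₂ : ℝ → ℝ) (v₁ v₂ : ℝ)

theorem piV_Hmul_Hinv_graphMap :
    piV (Hmul (Hinv (graphMap φ₁ φ₂ v₁)) (graphMap φ₁ φ₂ v₂)) = (v₂ - v₁, 0, 0) := by
  simp only [piV, Hmul, Hinv, graphMap]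
  ring_nf

theorem piW_Hmul_Hinv_graphMap :
    piW (Hmul (Hinv (graphMap φ₁ φ₂ v₁)) (graphMap φ₁ φ₂ v₂)) =
      (0, φ₁ v₂ - φ₁ v₁, φ₂ v₂ - φ₂ v₁ + (v₂ - v₁) * φ₁ v₁) := by
  simp only [piW, Hmul, Hinv, graphMap, Prod.mk.injEq]
  refine ⟨trivial, by ring, by ring⟩

theorem abs_taylor_le_of_Hnorm_piW_le {L : ℝ}
    (h : Hnorm (piW (Hmul (Hinv (graphMap φ₁ φ₂ v₁)) (graphMap φ₁ φ₂ v₂))) ≤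
      L * Hnorm (piV (Hmul (Hinv (graphMap φ₁ φ₂ v₁)) (graphMap φ₁ φ₂ v₂)))) :
    |φ₂ v₂ - φ₂ v₁ + (v₂ - v₁) * φ₁ v₁| ≤ L ^ 2 * (v₂ - v₁) ^ 2 := by
  rw [piV_Hmul_Hinv_graphMap, Hnorm_mk_zero_zero] at h
  have hsqrt := (sqrt_abs_le_Hnorm _).trans h
  rw [piW_Hmul_Hinv_graphMap, Real.sqrt_le_iff] at hsqrt
  calc |φ₂ v₂ - φ₂ v₁ + (v₂ - v₁) * φ₁ v₁| ≤ (L * |v₂ - v₁|) ^ 2 := hsqrt.2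
    _ = L ^ 2 * (v₂ - v₁) ^ 2 := by rw [mul_pow, sq_abs]

end GraphMap

theorem abs_slope_sub_le_of_abs_taylor_le {f g : ℝ → ℝ} {C x y : ℝ} (hxy : x ≠ y)
    (h : |f y - f x - (y - x) * g x| ≤ C * (y - x) ^ 2) :
    |(f x - f y) / (x - y) - g x| ≤ C * |x - y| := by
  have hyx : 0 < |y - x| := abs_pos.mpr (sub_ne_zero.mpr hxy.symm)
  have hslope : (f x - f y) / (x - y) - g x = (f y - f x - (y - x) * g x) / (y - x) := by
    field_simp [sub_ne_zero.mpr hxy, sub_ne_zero.mpr hxy.symm]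
    ring
  rw [hslope, abs_div, div_le_iff₀ hyx, abs_sub_comm x y, mul_assoc, abs_mul_abs_self, ← sq]
  exact h

theorem stmt11 (E : Set ℝ) (φ₁ φ₂ : ℝ → ℝ) (L : ℝ)
    (hgraph : ∀ v₁ ∈ E, ∀ v₂ ∈ E,
      Hnorm (piW (Hmul (Hinv (graphMap φ₁ φ₂ v₁)) (graphMap φ₁ φ₂ v₂))) ≤
        L * Hnorm (piV (Hmul (Hinv (graphMap φ₁ φ₂ v₁)) (graphMap φ₁ φ₂ v₂)))) :
    ∀ x ∈ E, ∀ y ∈ E, x ≠ y →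
      |((-φ₂ x) - (-φ₂ y)) / (x - y) - φ₁ x| + |((-φ₂ x) - (-φ₂ y)) / (x - y) - φ₁ y| ≤
        2 * L ^ 2 * |x - y| := by
  have htaylor : ∀ v₁ ∈ E, ∀ v₂ ∈ E,
      |-φ₂ v₂ - -φ₂ v₁ - (v₂ - v₁) * φ₁ v₁| ≤ L ^ 2 * (v₂ - v₁) ^ 2 := fun v₁ h₁ v₂ h₂ => by
    rw [← abs_neg]
    convert abs_taylor_le_of_Hnorm_piW_le φ₁ φ₂ v₁ v₂ (hgraph v₁ h₁ v₂ h₂) using 2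
    ring
  intro x hx y hy hxy
  have hx' := abs_slope_sub_le_of_abs_taylor_le (f := fun v => -φ₂ v) hxy (htaylor x hx y hy)
  have hy' :=
    abs_slope_sub_le_of_abs_taylor_le (f := fun v => -φ₂ v) hxy.symm (htaylor y hy x hx)
  beta_reduce at hx' hy'
  rw [← neg_sub (-φ₂ x), ← neg_sub x, neg_div_neg_eq, abs_neg] at hy'
  linarith
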